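/- Let L be a language such that blim L is finite. Then the lexicographic ordering (L, <_ℓ) is scattered of Hausdorff rank at most one, in the following sense: there exist n : ℕ and a function f : L → Fin n such that u <_ℓ v implies f u ≤ f v for all u, v ∈ L, and for every i : Fin n the fiber L_i = {u ∈ L | f u = i} admits either a function h : L_i → ℕ with (u <_ℓ v → h u < h v) or a function h : L_i → ℕ with (u <_ℓ v → h v < h u). That is, (L, <_ℓ) is a finite ordered sum of linear orders each of which embeds into ω or into ω* = −ω. (This is the order-theoretic content of the main theorem that a context-free language with finitely many limits is scattered of rank at most one with computable order type.) -/

import Mathlib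

set_option linter.unusedSectionVars false



variable {α : Type*} [Fintype α] [LinearOrder α] [Nonempty α]

/-- `w↾n`, the length-`n` prefix of the ω-word `w`. -/
def restrict (w : ℕ → α) (n : ℕ) : List α := List.ofFn (fun i : Fin n => w i)

/-- `w` is a limit of `L`: every finite prefix of `w` is a proper prefix of some word of `L`. -/
def blim (L : Set (List α)) : Set (ℕ → α) :=
  {w | ∀ n : ℕ, ∃ u ∈ L, restrict w n <+: u ∧ restrict w n ≠ u}

/-- `u <_ℓ w` for a word `u` and an ω-word `w`. -/
def wordLtOmega (u : List α) (w : ℕ → α) : Prop :=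
  u = restrict w u.length ∨
    ∃ (i : ℕ) (h : i < u.length), u.take i = restrict w i ∧ u.get ⟨i, h⟩ < w i

/-- `w <_ℓ u` for an ω-word `w` and a word `u`. -/
def omegaLtWord (w : ℕ → α) (u : List α) : Prop :=
  ∃ (i : ℕ) (h : i < u.length), u.take i = restrict w i ∧ w i < u.get ⟨i, h⟩

/-- `w <_ℓ w'` for ω-words. -/
def omegaLt (w w' : ℕ → α) : Prop :=
  ∃ n : ℕ, (∀ i < n, w i = w' i) ∧ w n < w' n

/-- `w ≤_ℓ w'` for ω-words. -/
def omegaLe (w w' : ℕ → α) : Prop := w = w' ∨ omegaLt w w'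

/-- Concatenation `u·w` of a finite word and an ω-word. -/
def ocat (u : List α) (w : ℕ → α) : ℕ → α :=
  fun i => if h : i < u.length then u.get ⟨i, h⟩ else w (i - u.length)

/-- The strict order `u <_s v` on words. -/
def strictLt (u v : List α) : Prop :=
  ∃ (x y z : List α) (a b : α), a < b ∧ u = x ++ a :: y ∧ v = x ++ b :: z

/-- `v^ω` for a nonempty word `v`. -/
def wpow (v : List α) (hv : v ≠ []) : ℕ → α :=
  fun i => v.get ⟨i % v.length, Nat.mod_lt _ (List.length_pos_iff.mpr hv)⟩

/-- `u^n`, the `n`-fold concatenation of the word `u` with itself. -/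
def npow (u : List α) (n : ℕ) : List α := (List.replicate n u).flatten

section AuxLemmas

lemma restrict_length (w : ℕ → α) (n : ℕ) : (restrict w n).length = n := by
  simp [restrict]

lemma restrict_getElem (w : ℕ → α) (n i : ℕ) (h : i < n) :
    (restrict w n)[i]'(by simp [restrict]; omega) = w i := by
  simp [restrict]

lemma restrict_take (w : ℕ → α) {n i : ℕ} (h : i ≤ n) :
    (restrict w n).take i = restrict w i := by
  apply List.ext_getElem
  · simp [restrict_length]; omega
  · intro j h1 h2
    rw [List.getElem_take, restrict_getElem, restrict_getElem]
    · rwa [restrict_length] at h2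
    · have := restrict_length w n; simp [restrict_length] at h1; omega

lemma restrict_succ (w : ℕ → α) (n : ℕ) :
    restrict w (n + 1) = restrict w n ++ [w n] := by
  show List.ofFn _ = _
  rw [List.ofFn_succ']
  simp [restrict, List.concat_eq_append]

lemma take_eq_of_take_eq {u v : List α} {i j : ℕ} (hij : i ≤ j)
    (h : u.take j = v.take j) : u.take i = v.take i := by
  rw [← Nat.min_eq_left hij, ← List.take_take, h, List.take_take]

lemma getElem_of_take_eq {u v : List α} {i j : ℕ} (h : u.take j = v.take j)
    (hij : i < j) (hu : i < u.length) (hv : i < v.length) : u[i] = v[i] := by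
  have h1 : (u.take j)[i]'(by simp; omega) = (v.take j)[i]'(by simp; omega) := by
    congr 1
  rwa [List.getElem_take, List.getElem_take] at h1

/-- If two lists agree up to position `i` and differ there, the lex comparison. -/
lemma lex_of_take_getElem {u v : List α} {i : ℕ} (hu : i < u.length) (hv : i < v.length)
    (ht : u.take i = v.take i) (hlt : u[i] < v[i]) : List.Lex (· < ·) u v := by
  induction i generalizing u v with
  | zero =>
    match u, v, hu, hv with
    | a :: u', b :: v', _, _ => exact List.Lex.rel hlt
  | succ i ih =>
    match u, v, hu, hv with
    | a :: u', b :: v', hu, hv =>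
      simp only [List.take_succ_cons, List.cons.injEq] at ht
      obtain ⟨rfl, ht⟩ := ht
      exact List.Lex.cons (ih (by simpa using hu) (by simpa using hv) ht (by simpa using hlt))

lemma lex_of_prefix {u v : List α} (h : u <+: v) (hne : u ≠ v) : List.Lex (· < ·) u v := by
  induction u generalizing v with
  | nil =>
    match v with
    | [] => exact absurd rfl hne
    | b :: v' => exact List.Lex.nil
  | cons a u' ih =>
    match v with
    | [] => exact absurd (List.eq_nil_of_prefix_nil h) (by simp)
    | b :: v' =>
      rw [List.cons_prefix_cons] at h
      obtain ⟨rfl, h⟩ := h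
      exact List.Lex.cons (ih h (fun hh => hne (by rw [hh])))

lemma lex_dest {u v : List α} (h : List.Lex (· < ·) u v) :
    (u <+: v ∧ u ≠ v) ∨ ∃ (i : ℕ) (hu : i < u.length) (hv : i < v.length),
      u.take i = v.take i ∧ u[i] < v[i] := by
  induction h with
  | nil => exact Or.inl ⟨List.nil_prefix, by simp⟩
  | @rel a l₁ b l₂ hab => exact Or.inr ⟨0, by simp, by simp, by simp, hab⟩
  | @cons a l₁ l₂ h ih =>
    rcases ih with ⟨hp, hne⟩ | ⟨i, hu, hv, ht, hlt⟩
    · exact Or.inl ⟨(List.cons_prefix_cons).mpr ⟨rfl, hp⟩, by simpa using hne⟩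
    · exact Or.inr ⟨i + 1, by simpa using hu, by simpa using hv, by simpa using ht,
        by simpa using hlt⟩

lemma first_diff {u v : List α} (hl : u.length = v.length) (hne : u ≠ v) :
    ∃ (i : ℕ) (hu : i < u.length) (hv : i < v.length),
      u.take i = v.take i ∧ u[i] ≠ v[i] := by
  induction u generalizing v with
  | nil =>
    match v with
    | [] => exact absurd rfl hne
  | cons a u' ih =>
    match v with
    | b :: v' =>
      by_cases hab : a = b
      · subst hab
        have hne' : u' ≠ v' := fun hh => hne (by rw [hh])
        obtain ⟨i, hu, hv, ht, hd⟩ := ih (by simpa using hl) hne'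
        exact ⟨i + 1, by simpa using hu, by simpa using hv, by simp [ht], by simpa using hd⟩
      · exact ⟨0, by simp, by simp, by simp, by simpa using hab⟩

/-- Totality of word vs ω-word comparison. -/
lemma word_omega_total (u : List α) (w : ℕ → α) : wordLtOmega u w ∨ omegaLtWord w u := by
  by_cases hp : u = restrict w u.length
  · exact Or.inl (Or.inl hp)
  · obtain ⟨i, hu, hv, ht, hd⟩ := first_diff (by rw [restrict_length]) hp
    have hri : (restrict w u.length).take i = restrict w i :=
      restrict_take w (le_of_lt hu)
    have hwi : (restrict w u.length)[i] = w i := restrict_getElem w _ i (by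
      rwa [restrict_length] at hv)
    rcases lt_or_gt_of_ne hd with hlt | hgt
    · exact Or.inl (Or.inr ⟨i, hu, by rw [ht, hri], by simpa [hwi] using hlt⟩)
    · exact Or.inr ⟨i, hu, by rw [ht, hri], by simpa [hwi] using hgt⟩

/-- Mixed transitivity: `w <_ℓ u` and `u <_ℓ v` imply `w <_ℓ v`. -/
lemma omegaLtWord_of_lex {w : ℕ → α} {u v : List α} (h1 : omegaLtWord w u)
    (h2 : List.Lex (· < ·) u v) : omegaLtWord w v := by
  obtain ⟨i, hi, ht, hlt⟩ := h1
  simp only [List.get_eq_getElem] at hlt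
  rcases lex_dest h2 with ⟨hp, hne⟩ | ⟨j, hju, hjv, hjt, hjlt⟩
  · have hiv : i < v.length := lt_of_lt_of_le hi hp.length_le
    refine ⟨i, hiv, ?_, ?_⟩
    · have hvu : v.take i = u.take i := by
        conv_rhs => rw [(List.prefix_iff_eq_take).mp hp]
        rw [List.take_take, Nat.min_eq_left (le_of_lt hi)]
      rw [hvu, ht]
    · simp only [List.get_eq_getElem]
      rw [← hp.getElem hi]
      exact hlt
  · rcases lt_trichotomy j i with hji | rfl | hij
    · refine ⟨j, hjv, ?_, ?_⟩
      · have hui : (u.take i).take j = u.take j := by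
          rw [List.take_take]; congr 1; omega
        rw [← hjt, ← restrict_take w (le_of_lt hji), ← ht, hui]
      · simp only [List.get_eq_getElem]
        have ht' : u.take i = (restrict w i).take i := by
          rw [ht, List.take_of_length_le (by rw [restrict_length])]
        have h3 := getElem_of_take_eq (v := restrict w i) (i := j) (j := i) ht' hji hju
          (by rw [restrict_length]; omega)
        rw [restrict_getElem w i j hji] at h3
        rw [← h3]; exact hjlt
    · exact ⟨j, hjv, by rw [← hjt, ht], by simp only [List.get_eq_getElem]; exact lt_trans hlt hjlt⟩
    · refine ⟨i, by omega, ?_, ?_⟩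
      · rw [← ht, take_eq_of_take_eq (le_of_lt hij) hjt]
      · simp only [List.get_eq_getElem]
        rw [← getElem_of_take_eq hjt hij hi (by omega)]
        exact hlt

lemma omegaLtWord_of_le {w : ℕ → α} {u v : List α} (h1 : omegaLtWord w u)
    (h2 : u = v ∨ List.Lex (· < ·) u v) : omegaLtWord w v := by
  rcases h2 with rfl | h2
  · exact h1
  · exact omegaLtWord_of_lex h1 h2

/-- A word extending `restrict w (i+1)` agrees with `w` up to position `i`. -/
lemma take_of_restrict_prefix {w : ℕ → α} {x : List α} {i n : ℕ}
    (h : restrict w n <+: x) (hin : i ≤ n) : x.take i = restrict w i := by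
  have h1 : restrict w n = x.take n := by
    have := (List.prefix_iff_eq_take).mp h
    rwa [restrict_length] at this
  rw [← restrict_take w hin, h1, List.take_take, Nat.min_eq_left hin]

lemma getElem_of_restrict_prefix {w : ℕ → α} {x : List α} {i : ℕ}
    (h : restrict w (i + 1) <+: x) :
    x[i]'(by have := h.length_le; rw [restrict_length] at this; omega) = w i := by
  have hlen : i + 1 ≤ x.length := by
    have := h.length_le; rwa [restrict_length] at this
  have h1 := (h.getElem (by rw [restrict_length]; omega) :
    (restrict w (i+1))[i]'(by rw [restrict_length]; omega) = x[i]'(by omega))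
  rw [restrict_getElem w _ i (by omega)] at h1
  exact h1.symm

/-- König step: if infinitely many words of `S` properly extend `p`, then some one-letter
extension of `p` also has this property. -/
lemma koenig_step (S : Set (List α)) (p : List α)
    (hp : {x | x ∈ S ∧ p <+: x ∧ p ≠ x}.Infinite) :
    ∃ a : α, {x | x ∈ S ∧ p ++ [a] <+: x ∧ p ++ [a] ≠ x}.Infinite := by
  by_contra hcon
  push_neg at hcon
  have hfin : (⋃ a : α, ({p ++ [a]} ∪ {x | x ∈ S ∧ p ++ [a] <+: x ∧ p ++ [a] ≠ x})).Finite :=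
    Set.finite_iUnion (fun a => (Set.finite_singleton _).union (hcon a))
  have hsub : {x | x ∈ S ∧ p <+: x ∧ p ≠ x} ⊆
      ⋃ a : α, ({p ++ [a]} ∪ {x | x ∈ S ∧ p ++ [a] <+: x ∧ p ++ [a] ≠ x}) := by
    rintro x ⟨hxS, ⟨t, rfl⟩, hne⟩
    match t with
    | [] => exact absurd (by simp) hne
    | a :: t' =>
      apply Set.mem_iUnion.mpr ⟨a, ?_⟩
      by_cases ht' : t' = []
      · subst ht'; exact Or.inl rfl
      · refine Or.inr ⟨hxS, ⟨t', by simp⟩, ?_⟩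
        intro hh
        have hlen := congrArg List.length hh
        simp only [List.length_append, List.length_cons, List.length_nil] at hlen
        exact ht' (List.eq_nil_of_length_eq_zero (by omega))
  exact (hp.mono hsub) hfin

/-- The chain of prefixes used in König's lemma. -/
noncomputable def koenigChain (S : Set (List α)) (h0 : {x | x ∈ S ∧ [] <+: x ∧ [] ≠ x}.Infinite) :
    ℕ → {p : List α // {x | x ∈ S ∧ p <+: x ∧ p ≠ x}.Infinite}
  | 0 => ⟨[], h0⟩
  | n + 1 =>
    let ih := koenigChain S h0 n
    ⟨ih.1 ++ [(koenig_step S ih.1 ih.2).choose], (koenig_step S ih.1 ih.2).choose_spec⟩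

lemma koenigChain_length (S : Set (List α)) (h0 : {x | x ∈ S ∧ [] <+: x ∧ [] ≠ x}.Infinite)
    (n : ℕ) : (koenigChain S h0 n).1.length = n := by
  induction n with
  | zero => rfl
  | succ n ih => simp [koenigChain, ih]

/-- König's lemma: an infinite language has a limit. -/
lemma exists_blim_of_infinite {S : Set (List α)} (hS : S.Infinite) : ∃ w, w ∈ blim S := by
  have h0 : {x | x ∈ S ∧ [] <+: x ∧ [] ≠ x}.Infinite := by
    have : S \ {[]} ⊆ {x | x ∈ S ∧ [] <+: x ∧ [] ≠ x} := by
      rintro x ⟨hx1, hx2⟩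
      exact ⟨hx1, List.nil_prefix, fun hh => hx2 (by simp [← hh])⟩
    exact (hS.diff (Set.finite_singleton _)).mono this
  set C := koenigChain S h0 with hC
  refine ⟨fun n => (C (n + 1)).1[n]'(by rw [koenigChain_length]; omega), ?_⟩
  set w : ℕ → α := fun n => (C (n + 1)).1[n]'(by rw [koenigChain_length]; omega) with hw
  have hwn : ∀ n, w n = (koenig_step S (C n).1 (C n).2).choose := by
    intro n
    have hl : (C n).1.length = n := koenigChain_length S h0 n
    have hCs : (C (n + 1)).1 = (C n).1 ++ [(koenig_step S (C n).1 (C n).2).choose] := rfl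
    have h2 := List.getElem_of_eq hCs (show n < (C (n+1)).1.length by rw [koenigChain_length]; omega)
    show (C (n + 1)).1[n]'(by rw [koenigChain_length]; omega) = _
    rw [h2, List.getElem_append_right (by omega)]
    simp [hl]
  have hres : ∀ n, restrict w n = (C n).1 := by
    intro n
    induction n with
    | zero => simp [restrict]; rfl
    | succ n ih =>
      rw [restrict_succ, ih, hwn n]
      rfl
  intro n
  obtain ⟨x, hxS, hxp, hxne⟩ := (C n).2.nonempty
  exact ⟨x, hxS, by rw [hres n]; exact ⟨hxp, hxne⟩⟩

lemma blim_mono {S L : Set (List α)} (h : S ⊆ L) : blim S ⊆ blim L := by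
  intro w hw n
  obtain ⟨u, hu, h1, h2⟩ := hw n
  exact ⟨u, h hu, h1, h2⟩

/-- The number of limits of `L` lexicographically below `u`. -/
noncomputable def cntB (L : Set (List α)) (u : List α) : ℕ :=
  {w ∈ blim L | omegaLtWord w u}.ncard

lemma cntB_le (L : Set (List α)) (h : (blim L).Finite) (u : List α) :
    cntB L u ≤ (blim L).ncard :=
  Set.ncard_le_ncard (Set.sep_subset _ _) h

lemma cntB_mono (L : Set (List α)) (h : (blim L).Finite) {u v : List α}
    (huv : List.Lex (· < ·) u v) : cntB L u ≤ cntB L v :=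
  Set.ncard_le_ncard (fun w hw => ⟨hw.1, omegaLtWord_of_lex hw.2 huv⟩)
    (h.subset (Set.sep_subset _ _))

/-- Key finiteness: an interval of `L` between two words with the same number of limits
below them is finite. -/
lemma interval_finite (L : Set (List α)) (h : (blim L).Finite) {v1 v2 : List α}
    (h12 : v1 = v2 ∨ List.Lex (· < ·) v1 v2) (hc : cntB L v1 = cntB L v2) :
    {x | x ∈ L ∧ (v1 = x ∨ List.Lex (· < ·) v1 x) ∧ (x = v2 ∨ List.Lex (· < ·) x v2)}.Finite := by
  by_contra hinf
  set S := {x | x ∈ L ∧ (v1 = x ∨ List.Lex (· < ·) v1 x) ∧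
    (x = v2 ∨ List.Lex (· < ·) x v2)} with hSdef
  have hinf : S.Infinite := fun hf => hinf hf
  obtain ⟨w, hwS⟩ := exists_blim_of_infinite hinf
  have hwL : w ∈ blim L := blim_mono (fun x hx => hx.1) hwS
  -- helper to get an element of S extending a given prefix of w
  by_cases h1 : omegaLtWord w v1
  · -- impossible: words of S extending w deep enough would be < v1
    obtain ⟨i, hi, ht, hlt⟩ := h1
    simp only [List.get_eq_getElem] at hlt
    obtain ⟨x, hxS, hxp, _⟩ := hwS (i + 1)
    have hxlen : i + 1 ≤ x.length := by
      have := hxp.length_le; rwa [restrict_length] at this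
    have hlex : List.Lex (· < ·) x v1 := by
      apply lex_of_take_getElem (by omega) hi
      · rw [take_of_restrict_prefix hxp (by omega), ht]
      · rw [getElem_of_restrict_prefix hxp]; exact hlt
    rcases hxS.2.1 with rfl | hv1x
    · exact irrefl _ hlex
    · exact asymm hv1x hlex
  · by_cases h2 : omegaLtWord w v2
    · rcases h12 with rfl | hlt12
      · exact h1 h2
      · have hsub : {w' | w' ∈ blim L ∧ omegaLtWord w' v1} ⊆
            {w' | w' ∈ blim L ∧ omegaLtWord w' v2} :=
          fun w' hw' => ⟨hw'.1, omegaLtWord_of_lex hw'.2 hlt12⟩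
        have hmem : w ∈ {w' | w' ∈ blim L ∧ omegaLtWord w' v2} := ⟨hwL, h2⟩
        have hnmem : w ∉ {w' | w' ∈ blim L ∧ omegaLtWord w' v1} := fun hc2 => h1 hc2.2
        have hss := (Set.ssubset_iff_of_subset hsub).mpr ⟨w, hmem, hnmem⟩
        have hlt : cntB L v1 < cntB L v2 :=
          Set.ncard_lt_ncard hss (h.subset (fun x hx => hx.1))
        omega
    · -- w is above v2: words of S extending w deep enough would be > v2
      rcases (word_omega_total v2 w).resolve_right h2 with hpre | ⟨i, hi, ht, hlt⟩
      · -- v2 is a prefix of w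
        obtain ⟨x, hxS, hxp, hxne⟩ := hwS (v2.length + 1)
        have hxlen : v2.length + 1 ≤ x.length := by
          have := hxp.length_le; rwa [restrict_length] at this
        have hpx : v2 <+: x := by
          rw [List.prefix_iff_eq_take, take_of_restrict_prefix hxp (by omega), ← hpre]
        have hlex : List.Lex (· < ·) v2 x :=
          lex_of_prefix hpx (fun hh => by
            have := congrArg List.length hh; omega)
        rcases hxS.2.2 with rfl | hv2x
        · exact irrefl _ hlex
        · exact asymm hv2x hlex
      · simp only [List.get_eq_getElem] at hlt
        obtain ⟨x, hxS, hxp, _⟩ := hwS (i + 1)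
        have hxlen : i + 1 ≤ x.length := by
          have := hxp.length_le; rwa [restrict_length] at this
        have hlex : List.Lex (· < ·) v2 x := by
          apply lex_of_take_getElem hi (by omega)
          · rw [take_of_restrict_prefix hxp (by omega), ht]
          · rw [getElem_of_restrict_prefix hxp]; exact hlt
        rcases hxS.2.2 with rfl | hv2x
        · exact irrefl _ hlex
        · exact asymm hv2x hlex

end AuxLemmas


open Classical in
/-- A reference word ("pivot") in `L` with a given number of limits below, when one exists. -/
noncomputable def pivotB (L : Set (List α)) (c : ℕ) : List α :=
  if hc : ∃ p, p ∈ L ∧ cntB L p = c then hc.choose else []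

lemma pivotB_spec (L : Set (List α)) (c : ℕ) (hc : ∃ p, p ∈ L ∧ cntB L p = c) :
    pivotB L c ∈ L ∧ cntB L (pivotB L c) = c := by
  rw [pivotB, dif_pos hc]; exact hc.choose_spec

open Classical in
/-- Which side of the pivot a word lies on. -/
noncomputable def bitB (L : Set (List α)) (u : List α) : ℕ :=
  if List.Lex (· < ·) u (pivotB L (cntB L u)) then 0 else 1

lemma bitB_le (L : Set (List α)) (u : List α) : bitB L u ≤ 1 := by
  rw [bitB]; split <;> omega

lemma bitB_eq_zero_iff (L : Set (List α)) (u : List α) :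
    bitB L u = 0 ↔ List.Lex (· < ·) u (pivotB L (cntB L u)) := by
  rw [bitB]; split <;> simp_all


lemma lex_trichotomy (u v : List α) :
    List.Lex (· < ·) u v ∨ u = v ∨ List.Lex (· < ·) v u := trichotomous u v

lemma fiber_embeds (L : Set (List α)) (h : (blim L).Finite) {n : ℕ}
    (f : {u : List α // u ∈ L} → Fin n)
    (hf : ∀ u : {u : List α // u ∈ L}, 2 * cntB L u.1 + bitB L u.1 = (f u).val) :
    ∀ i : Fin n,
      (∃ h : {u : {u : List α // u ∈ L} // f u = i} → ℕ,
        ∀ a b : {u : {u : List α // u ∈ L} // f u = i},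
          List.Lex (· < ·) a.1.1 b.1.1 → h a < h b) ∨
      (∃ h : {u : {u : List α // u ∈ L} // f u = i} → ℕ,
        ∀ a b : {u : {u : List α // u ∈ L} // f u = i},
          List.Lex (· < ·) a.1.1 b.1.1 → h b < h a) := by
  intro i
  by_cases hne : Nonempty {u : {u : List α // u ∈ L} // f u = i}
  · obtain ⟨a0⟩ := hne
    set c := cntB L a0.1.1 with hc
    have hfi : ∀ a : {u : {u : List α // u ∈ L} // f u = i},
        2 * cntB L a.1.1 + bitB L a.1.1 = i.1 := by
      intro a
      rw [hf a.1, a.2]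
    have hkey : ∀ a : {u : {u : List α // u ∈ L} // f u = i},
        cntB L a.1.1 = c ∧ bitB L a.1.1 = bitB L a0.1.1 := by
      intro a
      have h1 := hfi a
      have h2 := hfi a0
      have h3 := bitB_le L a.1.1
      have h4 := bitB_le L a0.1.1
      constructor <;> omega
    have hex : ∃ p, p ∈ L ∧ cntB L p = c := ⟨a0.1.1, a0.1.2, rfl⟩
    have hpL := (pivotB_spec L c hex).1
    have hpc := (pivotB_spec L c hex).2
    by_cases hb0 : List.Lex (· < ·) a0.1.1 (pivotB L c)
    · -- bit 0 : every fiber element is < pivot; upper sets are finite; ω* case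
      have hlexp : ∀ a : {u : {u : List α // u ∈ L} // f u = i},
          List.Lex (· < ·) a.1.1 (pivotB L c) := by
        intro a
        have hz : bitB L a0.1.1 = 0 := by
          rw [bitB_eq_zero_iff, ← hc]
          exact hb0
        have hz2 : bitB L a.1.1 = 0 := (hkey a).2.trans hz
        have := (bitB_eq_zero_iff L a.1.1).mp hz2
        rwa [(hkey a).1] at this
      have hUfin : ∀ a : {u : {u : List α // u ∈ L} // f u = i},
          {b : {u : {u : List α // u ∈ L} // f u = i} |
            List.Lex (· < ·) a.1.1 b.1.1}.Finite := by
        intro a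
        have hI := interval_finite L h (v1 := a.1.1) (v2 := pivotB L c)
          (Or.inr (hlexp a)) (by rw [(hkey a).1, hpc])
        have hpre : {b : {u : {u : List α // u ∈ L} // f u = i} |
            List.Lex (· < ·) a.1.1 b.1.1} ⊆
            (fun b : {u : {u : List α // u ∈ L} // f u = i} => b.1.1) ⁻¹'
            {x | x ∈ L ∧ (a.1.1 = x ∨ List.Lex (· < ·) a.1.1 x) ∧
              (x = pivotB L c ∨ List.Lex (· < ·) x (pivotB L c))} :=
          fun b hb => ⟨b.1.2, Or.inr hb, Or.inr (hlexp b)⟩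
        exact ((hI.preimage (fun x _ y _ hxy => Subtype.ext (Subtype.ext hxy)))).subset hpre
      refine Or.inr ⟨fun a => {x : {u : {u : List α // u ∈ L} // f u = i} |
        List.Lex (· < ·) a.1.1 x.1.1}.ncard, ?_⟩
      intro a b hab
      have hss : {x : {u : {u : List α // u ∈ L} // f u = i} |
          List.Lex (· < ·) b.1.1 x.1.1} ⊂
          {x : {u : {u : List α // u ∈ L} // f u = i} |
          List.Lex (· < ·) a.1.1 x.1.1} := by
        have hsub2 : {x : {u : {u : List α // u ∈ L} // f u = i} |
            List.Lex (· < ·) b.1.1 x.1.1} ⊆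
            {x : {u : {u : List α // u ∈ L} // f u = i} |
            List.Lex (· < ·) a.1.1 x.1.1} := fun x hx => List.lex_trans lt_trans hab hx
        exact (Set.ssubset_iff_of_subset hsub2).mpr ⟨b, hab, fun hbb => irrefl _ hbb⟩
      exact Set.ncard_lt_ncard hss (hUfin a)
    · -- bit 1 : every fiber element is ≥ pivot; lower sets are finite; ω case
      have hgep : ∀ a : {u : {u : List α // u ∈ L} // f u = i},
          pivotB L c = a.1.1 ∨ List.Lex (· < ·) (pivotB L c) a.1.1 := by
        intro a
        have hz : bitB L a0.1.1 ≠ 0 := by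
          rw [Ne, bitB_eq_zero_iff, ← hc]
          exact hb0
        have hz2 : bitB L a.1.1 ≠ 0 := by rw [(hkey a).2]; exact hz
        have hnl : ¬ List.Lex (· < ·) a.1.1 (pivotB L c) := by
          intro hcon
          apply hz2
          rw [bitB_eq_zero_iff, (hkey a).1]
          exact hcon
        rcases lex_trichotomy a.1.1 (pivotB L c) with h1 | h1 | h1
        · exact absurd h1 hnl
        · exact Or.inl h1.symm
        · exact Or.inr h1
      have hLfin : ∀ a : {u : {u : List α // u ∈ L} // f u = i},
          {b : {u : {u : List α // u ∈ L} // f u = i} |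
            List.Lex (· < ·) b.1.1 a.1.1}.Finite := by
        intro a
        have hI := interval_finite L h (v1 := pivotB L c) (v2 := a.1.1)
          (hgep a) (by rw [(hkey a).1, hpc])
        have hpre : {b : {u : {u : List α // u ∈ L} // f u = i} |
            List.Lex (· < ·) b.1.1 a.1.1} ⊆
            (fun b : {u : {u : List α // u ∈ L} // f u = i} => b.1.1) ⁻¹'
            {x | x ∈ L ∧ (pivotB L c = x ∨ List.Lex (· < ·) (pivotB L c) x) ∧
              (x = a.1.1 ∨ List.Lex (· < ·) x a.1.1)} :=
          fun b hb => ⟨b.1.2, hgep b, Or.inr hb⟩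
        exact ((hI.preimage (fun x _ y _ hxy => Subtype.ext (Subtype.ext hxy)))).subset hpre
      refine Or.inl ⟨fun a => {x : {u : {u : List α // u ∈ L} // f u = i} |
        List.Lex (· < ·) x.1.1 a.1.1}.ncard, ?_⟩
      intro a b hab
      have hss : {x : {u : {u : List α // u ∈ L} // f u = i} |
          List.Lex (· < ·) x.1.1 a.1.1} ⊂
          {x : {u : {u : List α // u ∈ L} // f u = i} |
          List.Lex (· < ·) x.1.1 b.1.1} := by
        have hsub2 : {x : {u : {u : List α // u ∈ L} // f u = i} |
            List.Lex (· < ·) x.1.1 a.1.1} ⊆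
            {x : {u : {u : List α // u ∈ L} // f u = i} |
            List.Lex (· < ·) x.1.1 b.1.1} := fun x hx => List.lex_trans lt_trans hx hab
        exact (Set.ssubset_iff_of_subset hsub2).mpr ⟨a, hab, fun haa => irrefl _ haa⟩
      exact Set.ncard_lt_ncard hss (hLfin b)
  · exact Or.inl ⟨fun _ => 0, fun a _ _ => (hne ⟨a⟩).elim⟩

/-- a language with finitely many limits is, lexicographically, a finite
ordered sum of linear orders each embedding into `ω` or into `ω* = -ω`. -/
theorem stmt16 (L : Set (List α)) (h : (blim L).Finite) :
    ∃ (n : ℕ) (f : {u : List α // u ∈ L} → Fin n),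
      (∀ u v : {u : List α // u ∈ L}, List.Lex (· < ·) u.1 v.1 → f u ≤ f v) ∧
      ∀ i : Fin n,
        (∃ h : {u : {u : List α // u ∈ L} // f u = i} → ℕ,
          ∀ a b : {u : {u : List α // u ∈ L} // f u = i},
            List.Lex (· < ·) a.1.1 b.1.1 → h a < h b) ∨
        (∃ h : {u : {u : List α // u ∈ L} // f u = i} → ℕ,
          ∀ a b : {u : {u : List α // u ∈ L} // f u = i},
            List.Lex (· < ·) a.1.1 b.1.1 → h b < h a) := by
  classical
  set k := (blim L).ncard with hk
  have hfb : ∀ u : {u : List α // u ∈ L}, 2 * cntB L u.1 + bitB L u.1 < 2 * k + 2 := by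
    intro u
    have h1 := cntB_le L h u.1
    have h2 := bitB_le L u.1
    omega
  refine ⟨2 * k + 2, fun u => ⟨2 * cntB L u.1 + bitB L u.1, hfb u⟩, ?_, ?_⟩
  · -- monotonicity of f
    intro u v huv
    have hcle := cntB_mono L h huv
    have hbu := bitB_le L u.1
    have hbv := bitB_le L v.1
    apply Fin.mk_le_mk.mpr
    rcases eq_or_lt_of_le hcle with hce | hclt
    · have hble : bitB L u.1 ≤ bitB L v.1 := by
        by_cases h1 : List.Lex (· < ·) u.1 (pivotB L (cntB L u.1))
        · have := (bitB_eq_zero_iff L u.1).mpr h1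
          omega
        · by_cases h2 : List.Lex (· < ·) v.1 (pivotB L (cntB L v.1))
          · exfalso
            rw [← hce] at h2
            exact h1 (List.lex_trans lt_trans huv h2)
          · have hb1 : bitB L u.1 = 1 := by
              rcases Nat.le_one_iff_eq_zero_or_eq_one.mp hbu with h0 | h0
              · exact absurd ((bitB_eq_zero_iff L u.1).mp h0) h1
              · exact h0
            have hb2 : bitB L v.1 = 1 := by
              rcases Nat.le_one_iff_eq_zero_or_eq_one.mp hbv with h0 | h0
              · exact absurd ((bitB_eq_zero_iff L v.1).mp h0) h2
              · exact h0
            omega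
      omega
    · omega
  · exact fiber_embeds L h _ (fun u => rfl)
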